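/- Under the FPTAS-NN recursion (as in the feasibility theorem), let M^OPT be an optimal Knapsack solution with profit p^OPT, and for i ∈ [n] let p^OPT_i and s^OPT_i be the profit and size of M^OPT ∩ [i]. Then for every i ∈ [n] and every integer p with 1 ≤ p ≤ ⌈p^OPT_i / d_i⌉ - i, it holds that g(p,i) ≤ s^OPT_i. -/

import Mathlib

/-- The rounding granularity `d_i = max(1, (∑_{j ≤ i} p_j) / P)` of the FPTAS-NN. -/
noncomputable def granularity (P : ℕ) (pr : ℕ → ℕ) (i : ℕ) : ℝ :=
  max 1 ((∑ j ∈ Finset.Icc 1 i, (pr j : ℝ)) / P)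

/-!
Fix the profit `Q_i` and size `S_i` of `M ∩ [1, i]` and argue by induction on `i`, the case
`i = 0` being vacuous. For `p ≤ ⌈Q_{i+1} / d_{i+1}⌉ - (i + 1)` we have
`p d_{i+1} < Q_{i+1} - i d_{i+1} ≤ ⌈Q_i / d_i⌉ d_i - i d_i + c`, where `c = p_{i+1}` if item `i + 1`
belongs to `M` and `c = 0` otherwise; here `d_i ≤ d_{i+1}` is used. Hence the rounded index
`k` of the matching branch of the recursion satisfies `k ≤ ⌈Q_i / d_i⌉ - i`, and the induction
hypothesis bounds `g k i` by `S_i`.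
-/

open Finset

theorem Int.isLeast_ceil_div_sub {a b c : ℝ} (hc : 0 < c) :
    IsLeast {k : ℤ | a ≤ k * c + b} ⌈(a - b) / c⌉ := by
  have : {k : ℤ | a ≤ k * c + b} = Set.Ici ⌈(a - b) / c⌉ := by
    ext k
    rw [Set.mem_ofPred_eq, Set.mem_Ici, Int.ceil_le, div_le_iff₀ hc, sub_le_iff_le_add]
  exact this ▸ isLeast_Ici

theorem Int.isLeast_ceil_div {a c : ℝ} (hc : 0 < c) :
    IsLeast {k : ℤ | a ≤ k * c} ⌈a / c⌉ := by
  simpa using Int.isLeast_ceil_div_sub (a := a) (b := 0) hc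

theorem Finset.inter_Icc_add_one_of_mem {M : Finset ℕ} {i : ℕ} (h : i + 1 ∈ M) :
    M ∩ Icc 1 (i + 1) = insert (i + 1) (M ∩ Icc 1 i) := by
  rw [← insert_Icc_right_eq_Icc_add_one (by omega), inter_insert_of_mem h]

theorem Finset.inter_Icc_add_one_of_notMem {M : Finset ℕ} {i : ℕ} (h : i + 1 ∉ M) :
    M ∩ Icc 1 (i + 1) = M ∩ Icc 1 i := by
  rw [← insert_Icc_right_eq_Icc_add_one (by omega), inter_insert_of_notMem h]

/-- `Q`, `d` are the prefix profit and granularity at stage `i`, and `Q'`, `d'` at stage `i + 1`. -/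
theorem mul_le_ceil_div_sub_mul_add {d d' Q Q' c : ℝ} {p i : ℕ} (hd : 0 < d)
    (hdd' : d ≤ d') (hQ' : Q' ≤ Q + c) (hp : p ≤ ⌈Q' / d'⌉ - (i + 1)) :
    p * d' ≤ ((⌈Q / d⌉ - i : ℤ) : ℝ) * d + c := by
  have hlt : ((p + i : ℤ) : ℝ) < Q' / d' := Int.lt_ceil.mp (by omega)
  have hQ'd' : (p + i) * d' < Q' := by
    push_cast at hlt
    exact (lt_div_iff₀ (hd.trans_le hdd')).mp hlt
  have hQd : Q ≤ ⌈Q / d⌉ * d := (div_le_iff₀ hd).mp (Int.le_ceil _)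
  have hid : (i : ℝ) * d ≤ i * d' := mul_le_mul_of_nonneg_left hdd' i.cast_nonneg
  push_cast
  linarith

section Granularity

variable {P : ℕ} {pr : ℕ → ℕ}

theorem one_le_granularity (i : ℕ) : 1 ≤ granularity P pr i := le_max_left _ _

theorem granularity_pos (i : ℕ) : 0 < granularity P pr i :=
  one_pos.trans_le (one_le_granularity i)

theorem granularity_mono : Monotone (granularity P pr) := fun _ _ hij =>
  max_le_max le_rfl <| div_le_div_of_nonneg_right
    (sum_le_sum_of_subset_of_nonneg (Icc_subset_Icc_right hij) fun _ _ _ => by positivity)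
    P.cast_nonneg

theorem ceil_sum_div_granularity_le (hP : 1 ≤ P) {T : Finset ℕ} {i : ℕ} (hT : T ⊆ Icc 1 i) :
    ⌈(∑ j ∈ T, (pr j : ℝ)) / granularity P pr i⌉ ≤ P := by
  have hP' : (0 : ℝ) < P := by exact_mod_cast hP
  have hsum : ∑ j ∈ T, (pr j : ℝ) ≤ ∑ j ∈ Icc 1 i, (pr j : ℝ) :=
    sum_le_sum_of_subset_of_nonneg hT fun _ _ _ => by positivity
  have hd : (∑ j ∈ Icc 1 i, (pr j : ℝ)) / P ≤ granularity P pr i := le_max_right _ _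
  rw [Int.ceil_le, div_le_iff₀ (granularity_pos i)]
  rw [div_le_iff₀ hP'] at hd
  push_cast
  linarith

end Granularity

/-- The FPTAS-NN recursion for the table `g p i`, `1 ≤ p ≤ P`, `1 ≤ i ≤ n`: the two branches
skip item `i` or pack it, and `k1`, `k2` are the rounded indices at stage `i - 1`. -/
def FptasNNRecursion (n P : ℕ) (pr : ℕ → ℕ) (s : ℕ → ℝ) (g : ℕ → ℕ → ℝ) : Prop :=
  ∀ i ∈ Finset.Icc 1 n, ∀ p ∈ Finset.Icc 1 P, ∀ k1 k2 : ℤ,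
    IsLeast {k : ℤ | (p : ℝ) * granularity P pr i ≤ (k : ℝ) * granularity P pr (i - 1)} k1 →
    IsLeast {k : ℤ | (p : ℝ) * granularity P pr i ≤
      (k : ℝ) * granularity P pr (i - 1) + (pr i : ℝ)} k2 →
    g p i = min (if k1 ≤ (P : ℤ) then g k1.toNat (i - 1) else 2)
      (s i + if 1 ≤ k2 then g k2.toNat (i - 1) else 0)

def FptasNNInvariantAt (P : ℕ) (pr : ℕ → ℕ) (s : ℕ → ℝ) (g : ℕ → ℕ → ℝ) (M : Finset ℕ)
    (i : ℕ) : Prop :=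
  ∀ p : ℕ, 1 ≤ p → (p : ℤ) ≤ ⌈(∑ j ∈ M ∩ Icc 1 i, (pr j : ℝ)) / granularity P pr i⌉ - i →
    g p i ≤ ∑ j ∈ M ∩ Icc 1 i, s j

namespace FptasNNInvariantAt

variable {P : ℕ} {pr : ℕ → ℕ} {s : ℕ → ℝ} {g : ℕ → ℕ → ℝ} {M : Finset ℕ} {i : ℕ}

theorem zero : FptasNNInvariantAt P pr s g M 0 := fun p hp hple => by
  simp only [Icc_eq_empty_of_lt zero_lt_one, inter_empty, sum_empty, zero_div, Int.ceil_zero,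
    Nat.cast_zero, sub_self] at hple
  omega

theorem apply_toNat (h : FptasNNInvariantAt P pr s g M i) {k : ℤ} (hk : 1 ≤ k)
    (hkle : k ≤ ⌈(∑ j ∈ M ∩ Icc 1 i, (pr j : ℝ)) / granularity P pr i⌉ - i) :
    g k.toNat i ≤ ∑ j ∈ M ∩ Icc 1 i, s j :=
  h k.toNat (by omega) (by rwa [Int.toNat_of_nonneg (by omega)])

end FptasNNInvariantAt

theorem FptasNNRecursion.invariantAt_add_one {n P : ℕ} {pr : ℕ → ℕ} {s : ℕ → ℝ}
    {g : ℕ → ℕ → ℝ} {M : Finset ℕ} {i : ℕ} (hrec : FptasNNRecursion n P pr s g) (hP : 1 ≤ P)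
    (hs : ∀ j, 0 ≤ s j) (hi : i + 1 ≤ n) (ih : FptasNNInvariantAt P pr s g M i) :
    FptasNNInvariantAt P pr s g M (i + 1) := by
  intro p hp hple
  set d := granularity P pr i
  set d' := granularity P pr (i + 1)
  set Q := ∑ j ∈ M ∩ Icc 1 i, (pr j : ℝ)
  have hQP : ⌈Q / d⌉ ≤ P := ceil_sum_div_granularity_le hP inter_subset_right
  have hQP' : ⌈(∑ j ∈ M ∩ Icc 1 (i + 1), (pr j : ℝ)) / d'⌉ ≤ P :=
    ceil_sum_div_granularity_le hP inter_subset_right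
  have hpP : p ≤ P := by omega
  have hd : 0 < d := granularity_pos i
  have hdd' : d ≤ d' := granularity_mono i.le_succ
  have hk1 := Int.isLeast_ceil_div (a := p * d') hd
  have hk2 := Int.isLeast_ceil_div_sub (a := p * d') (b := pr (i + 1)) hd
  rw [hrec (i + 1) (mem_Icc.mpr ⟨by omega, hi⟩) p (mem_Icc.mpr ⟨hp, hpP⟩) _ _
    (by simpa using hk1) (by simpa using hk2), Nat.add_sub_cancel]
  by_cases hmem : i + 1 ∈ M
  · have hnotmem : i + 1 ∉ M ∩ Icc 1 i := by simp
    have hQ' : ∑ j ∈ M ∩ Icc 1 (i + 1), (pr j : ℝ) ≤ Q + pr (i + 1) := by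
      rw [inter_Icc_add_one_of_mem hmem, sum_insert hnotmem, add_comm]
    have hk2le := hk2.2 (mul_le_ceil_div_sub_mul_add hd hdd' hQ' (by push_cast at hple; omega))
    rw [inter_Icc_add_one_of_mem hmem, sum_insert hnotmem]
    refine (min_le_right _ _).trans (add_le_add le_rfl ?_)
    split_ifs with hk2pos
    · exact ih.apply_toNat hk2pos hk2le
    · exact sum_nonneg fun j _ => hs j
  · have hQ' : ∑ j ∈ M ∩ Icc 1 (i + 1), (pr j : ℝ) ≤ Q + 0 := by
      rw [inter_Icc_add_one_of_notMem hmem, add_zero]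
    have hk1le := hk1.2 <|
      (mul_le_ceil_div_sub_mul_add hd hdd' hQ' (by push_cast at hple; omega)).trans_eq (add_zero _)
    have hk1pos : 0 < ⌈p * d' / d⌉ :=
      Int.ceil_pos.mpr (div_pos (mul_pos (by exact_mod_cast hp) (hd.trans_le hdd')) hd)
    rw [inter_Icc_add_one_of_notMem hmem, if_pos (by omega)]
    exact (min_le_left _ _).trans (ih.apply_toNat hk1pos hk1le)

theorem fptas_nn_invariant_general (n P : ℕ) (hP : 1 ≤ P)
    (pr : ℕ → ℕ)
    (s : ℕ → ℝ) (hs : ∀ j, 0 < s j ∧ s j ≤ 1)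
    (g : ℕ → ℕ → ℝ)
    (hgrec : ∀ i ∈ Finset.Icc 1 n, ∀ p ∈ Finset.Icc 1 P, ∀ k1 k2 : ℤ,
      IsLeast {k : ℤ | (p : ℝ) * granularity P pr i ≤ (k : ℝ) * granularity P pr (i - 1)} k1 →
      IsLeast {k : ℤ | (p : ℝ) * granularity P pr i ≤
        (k : ℝ) * granularity P pr (i - 1) + (pr i : ℝ)} k2 →
      g p i = min (if k1 ≤ (P : ℤ) then g k1.toNat (i - 1) else 2)
        (s i + if 1 ≤ k2 then g k2.toNat (i - 1) else 0))
    (MOPT : Finset ℕ) :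
    ∀ i ∈ Finset.Icc 1 n, ∀ p : ℕ, 1 ≤ p →
      (p : ℤ) ≤ ⌈(∑ j ∈ MOPT ∩ Finset.Icc 1 i, (pr j : ℝ)) / granularity P pr i⌉ - (i : ℤ) →
      g p i ≤ ∑ j ∈ MOPT ∩ Finset.Icc 1 i, s j := by
  have hrec : FptasNNRecursion n P pr s g := hgrec
  have hinv : ∀ i ≤ n, FptasNNInvariantAt P pr s g MOPT i := by
    intro i
    induction i with
    | zero => exact fun _ => .zero
    | succ i ih =>
      exact fun hi => hrec.invariantAt_add_one hP (fun j => (hs j).1.le) hi (ih (by omega))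
  exact fun i hi => hinv i (mem_Icc.mp hi).2

theorem fptas_nn_invariant (n P : ℕ) (hP : 1 ≤ P)
    (pr : ℕ → ℕ) (hpr : ∀ j, 1 ≤ pr j)
    (s : ℕ → ℝ) (hs : ∀ j, 0 < s j ∧ s j ≤ 1)
    (g : ℕ → ℕ → ℝ)
    (hg0 : ∀ p ∈ Finset.Icc 1 P, g p 0 = 2)
    (hgrec : ∀ i ∈ Finset.Icc 1 n, ∀ p ∈ Finset.Icc 1 P, ∀ k1 k2 : ℤ,
      IsLeast {k : ℤ | (p : ℝ) * granularity P pr i ≤ (k : ℝ) * granularity P pr (i - 1)} k1 →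
      IsLeast {k : ℤ | (p : ℝ) * granularity P pr i ≤
        (k : ℝ) * granularity P pr (i - 1) + (pr i : ℝ)} k2 →
      g p i = min (if k1 ≤ (P : ℤ) then g k1.toNat (i - 1) else 2)
        (s i + if 1 ≤ k2 then g k2.toNat (i - 1) else 0))
    (MOPT : Finset ℕ) (hMsub : MOPT ⊆ Finset.Icc 1 n)
    (hMfeas : (∑ j ∈ MOPT, s j) ≤ 1)
    (hMopt : ∀ M : Finset ℕ, M ⊆ Finset.Icc 1 n → (∑ j ∈ M, s j) ≤ 1 →
      (∑ j ∈ M, (pr j : ℝ)) ≤ ∑ j ∈ MOPT, (pr j : ℝ)) :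
    ∀ i ∈ Finset.Icc 1 n, ∀ p : ℕ, 1 ≤ p →
      (p : ℤ) ≤ ⌈(∑ j ∈ MOPT ∩ Finset.Icc 1 i, (pr j : ℝ)) / granularity P pr i⌉ - (i : ℤ) →
      g p i ≤ ∑ j ∈ MOPT ∩ Finset.Icc 1 i, s j :=
  fptas_nn_invariant_general n P hP pr s hs g hgrec MOPT
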